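/- arXiv:2602.14103 — 3 statements merged into one kernel-verified Lean document; each statement's English description precedes it below -/
import Mathlib

section
/- The preimage under f of the point 0 = Σ 0·2^{-n} is exactly the finite set of points with constant s-adic expansion Δ_{(a)} with a ∈ A₀; in particular f⁻¹({0}) is finite with cardinality |A₀|. -/
open Set Filter

/-- Value of an `s`-adic code `α`: `∑ αₙ / sⁿ⁺¹`. -/
noncomputable def sval (s : ℕ) (α : ℕ → ℕ) : ℝ := ∑' n, (α n : ℝ) / (s : ℝ) ^ (n + 1)

/-- `α` is a sequence of digits in `{0, …, s−1}`. -/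
def isDigits (s : ℕ) (α : ℕ → ℕ) : Prop := ∀ n, α n < s

/-- The `s`-adic cylinder of rank `m` with base `c₀ … c_{m−1}`. -/
def cylinder (s m : ℕ) (c : ℕ → ℕ) : Set ℝ :=
  {x | ∃ α : ℕ → ℕ, isDigits s α ∧ (∀ i < m, α i = c i) ∧ x = sval s α}

/-- The sequence of output binary digits `βₙ`. -/
def betaSeq (A1 : Finset ℕ) (α : ℕ → ℕ) : ℕ → ℕ
  | 0 => if α 0 ∈ A1 then 1 else 0
  | n + 1 => if α (n + 1) = α n then betaSeq A1 α n else 1 - betaSeq A1 α n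

lemma summable_digits (s : ℕ) (hs : 1 < s) (α : ℕ → ℕ) (C : ℕ) (hC : ∀ n, α n ≤ C) :
    Summable (fun n => (α n : ℝ) / (s : ℝ) ^ (n + 1)) := by
  have hs1R : (1:ℝ) < s := by exact_mod_cast hs
  have hs0R : (0:ℝ) < s := by linarith
  refine Summable.of_nonneg_of_le (fun n => by positivity) (fun n => ?_)
    ((summable_geometric_of_lt_one (by positivity)
      (inv_lt_one_of_one_lt₀ hs1R)).mul_left (C : ℝ))
  rw [inv_pow, ← div_eq_mul_inv]
  apply div_le_div₀ (by positivity) (by exact_mod_cast hC n) (by positivity)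
  exact pow_le_pow_right₀ (by linarith) (Nat.le_succ n)

lemma sval_const (s : ℕ) (hs : 1 < s) (a : ℕ) :
    sval s (fun _ => a) = (a : ℝ) / ((s : ℝ) - 1) := by
  have hs1R : (1:ℝ) < s := by exact_mod_cast hs
  have hs0R : (0:ℝ) < s := by linarith
  have hinv : (s:ℝ)⁻¹ < 1 := inv_lt_one_of_one_lt₀ hs1R
  have hcongr : ∀ n : ℕ, (a:ℝ) / (s:ℝ)^(n+1) = ((a:ℝ) / s) * ((s:ℝ)⁻¹)^n := by
    intro n
    rw [inv_pow, ← div_eq_mul_inv, div_div, pow_succ, mul_comm]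
  unfold sval
  rw [tsum_congr hcongr, tsum_mul_left, tsum_geometric_of_lt_one (by positivity) hinv]
  have h1 : (1:ℝ) - (s:ℝ)⁻¹ ≠ 0 := by
    have : (s:ℝ)⁻¹ < 1 := hinv
    intro h; rw [sub_eq_zero] at h; linarith
  have h2 : (s:ℝ) - 1 ≠ 0 := by intro h; rw [sub_eq_zero] at h; linarith
  field_simp

/-- The orbit of `x` under the map `y ↦ fract (s y)`. -/
noncomputable def orb (s : ℕ) (x : ℝ) : ℕ → ℝ
  | 0 => x
  | n + 1 => Int.fract ((s:ℝ) * orb s x n)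

/-- The `s`-adic digits of `x`. -/
noncomputable def dig (s : ℕ) (x : ℝ) (n : ℕ) : ℕ := (⌊(s:ℝ) * orb s x n⌋).toNat

lemma orb_mem (s : ℕ) (x : ℝ) (hx : x ∈ Set.Ico (0:ℝ) 1) :
    ∀ n, orb s x n ∈ Set.Ico (0:ℝ) 1
  | 0 => hx
  | n + 1 => ⟨Int.fract_nonneg _, Int.fract_lt_one _⟩

lemma dig_cast (s : ℕ) (x : ℝ) (hx : x ∈ Set.Ico (0:ℝ) 1) (n : ℕ) :
    (dig s x n : ℝ) = (⌊(s:ℝ) * orb s x n⌋ : ℤ) := by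
  have h := orb_mem s x hx n
  have h0 : (0:ℤ) ≤ ⌊(s:ℝ) * orb s x n⌋ :=
    Int.floor_nonneg.mpr (mul_nonneg (by positivity) h.1)
  have := Int.toNat_of_nonneg h0
  exact_mod_cast congrArg (fun z : ℤ => (z : ℝ)) this

lemma dig_lt (s : ℕ) (hs : 0 < s) (x : ℝ) (hx : x ∈ Set.Ico (0:ℝ) 1) (n : ℕ) :
    dig s x n < s := by
  have h := orb_mem s x hx n
  have hs0R : (0:ℝ) < s := by exact_mod_cast hs
  have hfl : ⌊(s:ℝ) * orb s x n⌋ < (s:ℤ) := by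
    apply Int.floor_lt.mpr
    push_cast
    calc (s:ℝ) * orb s x n < (s:ℝ) * 1 := by
          exact mul_lt_mul_of_pos_left h.2 hs0R
      _ = s := mul_one _
  unfold dig
  omega

lemma orb_succ (s : ℕ) (x : ℝ) (hx : x ∈ Set.Ico (0:ℝ) 1) (n : ℕ) :
    orb s x (n + 1) = (s:ℝ) * orb s x n - dig s x n := by
  rw [show orb s x (n+1) = Int.fract ((s:ℝ) * orb s x n) from rfl, Int.fract,
    dig_cast s x hx n]

lemma orb_partial (s : ℕ) (hs : 0 < s) (x : ℝ) (hx : x ∈ Set.Ico (0:ℝ) 1) :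
    ∀ n, x = (∑ k ∈ Finset.range n, (dig s x k : ℝ) / (s:ℝ)^(k+1)) + orb s x n / (s:ℝ)^n := by
  have hsne : (s:ℝ) ≠ 0 := by positivity
  intro n
  induction n with
  | zero => simp [orb]
  | succ n ih =>
    rw [Finset.sum_range_succ, orb_succ s x hx n]
    have hkey : (dig s x n : ℝ)/(s:ℝ)^(n+1) + ((s:ℝ)*orb s x n - dig s x n)/(s:ℝ)^(n+1)
        = orb s x n/(s:ℝ)^n := by
      field_simp
      ring
    linarith [ih]

lemma sval_dig (s : ℕ) (hs : 1 < s) (x : ℝ) (hx : x ∈ Set.Ico (0:ℝ) 1) :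
    sval s (dig s x) = x := by
  have hs1R : (1:ℝ) < s := by exact_mod_cast hs
  have hs0R : (0:ℝ) < s := by linarith
  have hsum := summable_digits s hs (dig s x) s
    (fun n => (dig_lt s (by omega) x hx n).le)
  have h1 : Tendsto (fun n => ∑ k ∈ Finset.range n, (dig s x k : ℝ) / (s:ℝ)^(k+1))
      atTop (nhds (sval s (dig s x))) := hsum.hasSum.tendsto_sum_nat
  have h2 : Tendsto (fun n => orb s x n / (s:ℝ)^n) atTop (nhds 0) := by
    apply squeeze_zero (g := fun n => ((s:ℝ)⁻¹)^n)
      (fun n => div_nonneg (orb_mem s x hx n).1 (by positivity))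
    · intro n
      rw [inv_pow, ← one_div]
      apply div_le_div₀ (by norm_num) (orb_mem s x hx n).2.le (by positivity) le_rfl
    · exact tendsto_pow_atTop_nhds_zero_of_lt_one (by positivity)
        (inv_lt_one_of_one_lt₀ hs1R)
  have h3 : Tendsto (fun n => ∑ k ∈ Finset.range n, (dig s x k : ℝ) / (s:ℝ)^(k+1))
      atTop (nhds x) := by
    have := Tendsto.sub (tendsto_const_nhds : Tendsto (fun _ : ℕ => x) atTop (nhds x)) h2
    rw [sub_zero] at this
    refine this.congr (fun n => ?_)
    have := orb_partial s (by omega) x hx n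
    linarith
  exact tendsto_nhds_unique h1 h3

lemma beta_le_one (A1 : Finset ℕ) (α : ℕ → ℕ) : ∀ n, betaSeq A1 α n ≤ 1 := by
  intro n
  induction n with
  | zero => simp only [betaSeq]; split <;> omega
  | succ n ih => simp only [betaSeq]; split <;> omega

/-- the preimage of `0` under `f` (within `[0,1]`) is exactly the set of points
with constant `s`-adic expansion `(a,a,…)`, `a ∈ A₀`, i.e. the points `a/(s−1)`;
in particular it is finite of cardinality `|A₀|`. -/
theorem f_preimage_zero (s : ℕ) (hs : 2 < s) (A0 A1 : Finset ℕ)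
    (hA : A0 ∪ A1 = Finset.range s) (hdisj : Disjoint A0 A1)
    (h0 : A0.Nonempty) (h1 : A1.Nonempty) (f : ℝ → ℝ)
    (hf : ∀ α : ℕ → ℕ, isDigits s α → f (sval s α) = sval 2 (betaSeq A1 α)) :
    {x ∈ Set.Icc (0 : ℝ) 1 | f x = 0} = (fun a : ℕ => (a : ℝ) / ((s : ℝ) - 1)) '' ↑A0 ∧
    {x ∈ Set.Icc (0 : ℝ) 1 | f x = 0}.Finite ∧
    {x ∈ Set.Icc (0 : ℝ) 1 | f x = 0}.ncard = A0.card := by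
  have hs1 : 1 < s := by omega
  have hs1R : (1:ℝ) < s := by exact_mod_cast hs1
  have hsm1 : (0:ℝ) < (s:ℝ) - 1 := by linarith
  -- key: any digit sequence whose output value is zero is constant with value in A0
  have key : ∀ α : ℕ → ℕ, isDigits s α → sval 2 (betaSeq A1 α) = 0 →
      (∀ n, α n = α 0) ∧ α 0 ∈ A0 := by
    intro α hα hz
    have hsum2 : Summable (fun n => (betaSeq A1 α n : ℝ) / ((2:ℕ):ℝ)^(n+1)) :=
      summable_digits 2 (by norm_num) _ 1 (beta_le_one A1 α)
    have hzero : ∀ n, betaSeq A1 α n = 0 := by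
      intro n
      have hle : (betaSeq A1 α n : ℝ) / ((2:ℕ):ℝ)^(n+1) ≤
          sval 2 (betaSeq A1 α) :=
        Summable.le_tsum hsum2 n (fun j _ => by positivity)
      rw [hz] at hle
      have hge : (0:ℝ) ≤ (betaSeq A1 α n : ℝ) / ((2:ℕ):ℝ)^(n+1) := by positivity
      have : (betaSeq A1 α n : ℝ) / ((2:ℕ):ℝ)^(n+1) = 0 := le_antisymm hle hge
      have h2 : ((2:ℕ):ℝ)^(n+1) ≠ 0 := by positivity
      have := (div_eq_zero_iff.mp this).resolve_right h2
      exact_mod_cast this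
    have hconst : ∀ n, α n = α 0 := by
      intro n
      induction n with
      | zero => rfl
      | succ n ih =>
        by_contra h
        have heq : α (n+1) ≠ α n := fun he => h (he.trans ih)
        have : betaSeq A1 α (n+1) = 1 - betaSeq A1 α n := by
          simp only [betaSeq, if_neg heq]
        rw [hzero (n+1), hzero n] at this
        omega
    refine ⟨hconst, ?_⟩
    have hmem : α 0 ∈ A0 ∪ A1 := by
      rw [hA, Finset.mem_range]; exact hα 0
    rcases Finset.mem_union.mp hmem with h | h
    · exact h
    · exfalso
      have : betaSeq A1 α 0 = 1 := by simp [betaSeq, h]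
      rw [hzero 0] at this; omega
  have hset : {x ∈ Set.Icc (0 : ℝ) 1 | f x = 0} =
      (fun a : ℕ => (a : ℝ) / ((s : ℝ) - 1)) '' ↑A0 := by
    ext x
    constructor
    · rintro ⟨hx, hfx⟩
      obtain ⟨α, hαd, hαx⟩ : ∃ α, isDigits s α ∧ x = sval s α := by
        rcases eq_or_lt_of_le hx.2 with h1 | h1
        · refine ⟨fun _ => s - 1, fun n => show s - 1 < s by omega, ?_⟩
          rw [sval_const s hs1]
          rw [h1]
          have : ((s - 1 : ℕ) : ℝ) = (s:ℝ) - 1 := by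
            push_cast [Nat.cast_sub hs1.le]; ring
          rw [this, div_self hsm1.ne']
        · exact ⟨dig s x, fun n => dig_lt s (by omega) x ⟨hx.1, h1⟩ n,
            (sval_dig s hs1 x ⟨hx.1, h1⟩).symm⟩
      have h2 : sval 2 (betaSeq A1 α) = 0 := by
        rw [← hf α hαd, ← hαx, hfx]
      obtain ⟨hconst, hmem⟩ := key α hαd h2
      refine ⟨α 0, hmem, ?_⟩
      have hαe : α = fun _ => α 0 := funext hconst
      simp only
      rw [← sval_const s hs1, ← hαe, ← hαx]
    · rintro ⟨a, ha, rfl⟩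
      have haS : a < s := by
        have : a ∈ A0 ∪ A1 := Finset.mem_union_left A1 ha
        rw [hA, Finset.mem_range] at this; exact this
      have haR : (a:ℝ) ≤ (s:ℝ) - 1 := by
        have : (a:ℝ) + 1 ≤ s := by exact_mod_cast haS
        linarith
      refine ⟨⟨by positivity, ?_⟩, ?_⟩
      · rw [div_le_one hsm1]; exact haR
      · have hd : isDigits s (fun _ => a) := fun n => haS
        have hfv := hf _ hd
        rw [sval_const s hs1 a] at hfv
        simp only
        rw [hfv]
        have hb : ∀ n, betaSeq A1 (fun _ => a) n = 0 := by
          intro n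
          induction n with
          | zero => simp [betaSeq, Finset.disjoint_left.mp hdisj ha]
          | succ n ih => simp [betaSeq, ih]
        unfold sval
        have : ∀ n : ℕ, (betaSeq A1 (fun _ => a) n : ℝ) / ((2:ℕ):ℝ)^(n+1) = 0 := by
          intro n; rw [hb n]; simp
        rw [tsum_congr this, tsum_zero]
  have hinj : Function.Injective (fun a : ℕ => (a : ℝ) / ((s : ℝ) - 1)) := by
    intro a b h
    simp only at h
    field_simp at h
    exact_mod_cast h
  refine ⟨hset, ?_, ?_⟩
  · rw [hset]; exact A0.finite_toSet.image _
  · rw [hset, Set.ncard_image_of_injective _ hinj, Set.ncard_coe_finset]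
end

section
/- The level set f⁻¹({y}) for y = Σ_{n odd} 0·2^{-n} + Σ_{n even} 2^{-n} (i.e. y with binary expansion 0101…, y = 1/3) has the cardinality of the continuum: it equals the set of numbers with s-adic expansion (αₙ) satisfying α₁ ∈ A₀ and α_{n+1} ≠ αₙ for all n. -/
/-!
Since `1/3` has the unique binary expansion `0101…`, the condition `f x = 1/3` says `β = 0101…`,
which by the recursion defining `β` means `α₁ ∈ A₀` and `α_{n+1} ≠ αₙ` for all `n`. A digit
sequence that is not eventually constant is the only expansion of its value, so these numbers
correspond bijectively to such sequences, and choosing one of two admissible digits at each step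
embeds `{0,1}^ℕ`.
-/

open Set Filter

theorem Filter.eventuallyConst_comp_succ_iff {α : Type*} {f : ℕ → α} :
    EventuallyConst (fun n ↦ f (n + 1)) atTop ↔ EventuallyConst f atTop := by
  have : Nonempty α := ⟨f 0⟩
  simp only [eventuallyConst_iff_tendsto, tendsto_add_atTop_iff_nat]

theorem Filter.not_eventuallyConst_of_succ_ne {α : Type*} {f : ℕ → α}
    (h : ∀ n, f (n + 1) ≠ f n) : ¬EventuallyConst f atTop := fun hf ↦
  let ⟨n, hn⟩ := eventuallyConst_atTop_nat.1 hf
  h n (hn n le_rfl)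

namespace Real

variable {b : ℕ}

theorem natCast_mul_ofDigits (a : ℕ → Fin b) :
    (b : ℝ) * ofDigits a = (a 0 : ℕ) + ofDigits (fun i ↦ a (i + 1)) := by
  have hb : (b : ℝ) ≠ 0 := by exact_mod_cast (Fin.pos (a 0)).ne'
  rw [ofDigits_eq_sum_add_ofDigits a 1]
  simp only [Finset.sum_range_one, ofDigitsTerm, zero_add, pow_one]
  field_simp

theorem val_head_eq_zero_and_ofDigits_tail_eq_zero {a : ℕ → Fin b} (h : ofDigits a = 0) :
    (a 0 : ℕ) = 0 ∧ ofDigits (fun i ↦ a (i + 1)) = 0 := by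
  have key := natCast_mul_ofDigits a
  have := ofDigits_nonneg fun i ↦ a (i + 1)
  have : (0 : ℝ) ≤ (a 0 : ℕ) := Nat.cast_nonneg _
  rw [h, mul_zero] at key
  exact ⟨by exact_mod_cast (by linarith : ((a 0 : ℕ) : ℝ) = 0), by linarith⟩

theorem val_head_add_one_eq_and_ofDigits_tail_eq_one {a : ℕ → Fin b} (h : ofDigits a = 1) :
    (a 0 : ℕ) + 1 = b ∧ ofDigits (fun i ↦ a (i + 1)) = 1 := by
  have key := natCast_mul_ofDigits a
  have := ofDigits_le_one fun i ↦ a (i + 1)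
  have : ((a 0 : ℕ) : ℝ) + 1 ≤ b := by exact_mod_cast (a 0).isLt
  rw [h, mul_one] at key
  exact ⟨by exact_mod_cast (by linarith : ((a 0 : ℕ) : ℝ) + 1 = b), by linarith⟩

theorem val_eq_zero_of_ofDigits_eq_zero {a : ℕ → Fin b} (h : ofDigits a = 0) (n : ℕ) :
    (a n : ℕ) = 0 := by
  induction n generalizing a with
  | zero => exact (val_head_eq_zero_and_ofDigits_tail_eq_zero h).1
  | succ n ih => exact ih (val_head_eq_zero_and_ofDigits_tail_eq_zero h).2

theorem val_add_one_eq_of_ofDigits_eq_one {a : ℕ → Fin b} (h : ofDigits a = 1) (n : ℕ) :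
    (a n : ℕ) + 1 = b := by
  induction n generalizing a with
  | zero => exact (val_head_add_one_eq_and_ofDigits_tail_eq_one h).1
  | succ n ih => exact ih (val_head_add_one_eq_and_ofDigits_tail_eq_one h).2

theorem eventuallyConst_of_ofDigits_mem_zero_one {a : ℕ → Fin b}
    (h : ofDigits a = 0 ∨ ofDigits a = 1) : EventuallyConst a atTop := by
  refine eventuallyConst_atTop.2 ⟨0, fun n _ ↦ Fin.ext ?_⟩
  rcases h with h | h
  · rw [val_eq_zero_of_ofDigits_eq_zero h, val_eq_zero_of_ofDigits_eq_zero h]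
  · have := val_add_one_eq_of_ofDigits_eq_one h n
    have := val_add_one_eq_of_ofDigits_eq_one h 0
    omega

/-- If the expansions differ in their first digit, then the tail of each is `0.000…` or
`0.(b-1)(b-1)…`, since the tails lie in `[0, 1]` and their difference is a nonzero integer. -/
theorem head_eq_and_ofDigits_tail_eq {x y : ℕ → Fin b} (hx : ¬EventuallyConst x atTop)
    (h : ofDigits x = ofDigits y) :
    x 0 = y 0 ∧ ofDigits (fun i ↦ x (i + 1)) = ofDigits (fun i ↦ y (i + 1)) := by
  have ex := natCast_mul_ofDigits x
  have ey := natCast_mul_ofDigits y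
  rw [h] at ex
  have := ofDigits_nonneg fun i ↦ x (i + 1)
  have := ofDigits_le_one fun i ↦ x (i + 1)
  have := ofDigits_nonneg fun i ↦ y (i + 1)
  have := ofDigits_le_one fun i ↦ y (i + 1)
  have hval : (x 0 : ℕ) = y 0 := by
    refine by_contra fun hne ↦ hx (eventuallyConst_comp_succ_iff.1
      (eventuallyConst_of_ofDigits_mem_zero_one ?_))
    rcases Nat.lt_or_gt_of_ne hne with hlt | hlt
    · have : ((x 0 : ℕ) : ℝ) + 1 ≤ (y 0 : ℕ) := by exact_mod_cast hlt
      right; linarith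
    · have : ((y 0 : ℕ) : ℝ) + 1 ≤ (x 0 : ℕ) := by exact_mod_cast hlt
      left; linarith
  refine ⟨Fin.ext hval, ?_⟩
  rw [hval] at ex
  linarith

theorem eq_of_ofDigits_eq {x y : ℕ → Fin b} (hx : ¬EventuallyConst x atTop)
    (h : ofDigits x = ofDigits y) : x = y := by
  funext n
  induction n generalizing x y with
  | zero => exact (head_eq_and_ofDigits_tail_eq hx h).1
  | succ n ih =>
    exact ih (by rwa [eventuallyConst_comp_succ_iff]) (head_eq_and_ofDigits_tail_eq hx h).2

end Real

section sval

variable {s : ℕ} {α γ : ℕ → ℕ}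

def finDigits (hα : isDigits s α) : ℕ → Fin s := fun n ↦ ⟨α n, hα n⟩

theorem sval_eq_ofDigits (hα : isDigits s α) : sval s α = Real.ofDigits (finDigits hα) := by
  simp [sval, Real.ofDigits, Real.ofDigitsTerm, finDigits, div_eq_mul_inv]

theorem sval_mem_Icc (hα : isDigits s α) : sval s α ∈ Icc 0 1 := by
  rw [sval_eq_ofDigits hα]
  exact ⟨Real.ofDigits_nonneg _, Real.ofDigits_le_one _⟩

theorem exists_sval_eq_of_mem_Icc (hs : 1 < s) {x : ℝ} (hx : x ∈ Icc 0 1) :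
    ∃ α, isDigits s α ∧ sval s α = x := by
  obtain ⟨a, -, rfl⟩ := Real.ofDigits_SurjOn hs hx
  exact ⟨fun n ↦ a n, fun n ↦ (a n).isLt, sval_eq_ofDigits _⟩

theorem eq_of_sval_eq (hα : isDigits s α) (hγ : isDigits s γ)
    (hne : ¬EventuallyConst α atTop) (h : sval s α = sval s γ) : α = γ := by
  rw [sval_eq_ofDigits hα, sval_eq_ofDigits hγ] at h
  have := Real.eq_of_ofDigits_eq (x := finDigits hα) (fun hc ↦ hne (hc.comp Fin.val)) h
  funext n
  exact congrArg Fin.val (congrFun this n)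

theorem sval_two_mod_two : sval 2 (· % 2) = 1 / 3 := by
  have hd : isDigits 2 (· % 2) := fun n ↦ Nat.mod_lt n two_pos
  have hshift : (fun i ↦ finDigits hd (i + 1 + 1)) = finDigits hd := by
    funext i
    exact Fin.ext (by simp only [finDigits]; omega)
  have h0 := Real.natCast_mul_ofDigits (finDigits hd)
  have h1 := Real.natCast_mul_ofDigits fun i ↦ finDigits hd (i + 1)
  rw [hshift] at h1
  simp only [finDigits, Nat.zero_mod, zero_add, Nat.one_mod] at h0 h1
  rw [sval_eq_ofDigits hd]
  push_cast at h0 h1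
  linarith

theorem sval_two_eq_one_third_iff {β : ℕ → ℕ} (hβ : isDigits 2 β) :
    sval 2 β = 1 / 3 ↔ β = (· % 2) := by
  refine ⟨fun h ↦ (eq_of_sval_eq (fun n ↦ Nat.mod_lt n two_pos) hβ ?_ ?_).symm,
    fun h ↦ h ▸ sval_two_mod_two⟩
  · exact not_eventuallyConst_of_succ_ne fun n ↦ by omega
  · rw [sval_two_mod_two, h]

end sval

section betaSeq

variable (A1 : Finset ℕ) (α : ℕ → ℕ)

theorem betaSeq_isDigits : isDigits 2 (betaSeq A1 α) := by
  intro n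
  induction n with
  | zero => rw [betaSeq]; split_ifs <;> omega
  | succ n ih => rw [betaSeq]; split_ifs <;> omega

theorem betaSeq_eq_mod_two_iff :
    betaSeq A1 α = (· % 2) ↔ α 0 ∉ A1 ∧ ∀ n, α (n + 1) ≠ α n := by
  constructor
  · intro h
    refine ⟨fun h0 ↦ ?_, fun n hn ↦ ?_⟩
    · simpa [betaSeq, h0] using congrFun h 0
    · have := congrFun h (n + 1)
      rw [betaSeq, if_pos hn, congrFun h n] at this
      omega
  · rintro ⟨h0, hne⟩
    funext n
    induction n with
    | zero => simp [betaSeq, h0]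
    | succ n ih => rw [betaSeq, if_neg (hne n), ih]; omega

end betaSeq

section mod3Walk

/-- Each step adds `1` or `2` modulo `3`, so consecutive terms differ and the steps determine `g`;
this is where `s ≥ 3` is needed. -/
def mod3Walk (a : ℕ) (g : ℕ → Bool) : ℕ → ℕ
  | 0 => a
  | n + 1 => (mod3Walk a g n + 1 + (g n).toNat) % 3

variable {a : ℕ} {g : ℕ → Bool}

theorem mod3Walk_succ_ne (n : ℕ) : mod3Walk a g (n + 1) ≠ mod3Walk a g n := by
  have := Bool.toNat_le (g n)
  rw [mod3Walk]
  omega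

theorem mod3Walk_isDigits {s : ℕ} (hs : 2 < s) (ha : a < s) : isDigits s (mod3Walk a g) := by
  intro n
  cases n with
  | zero => exact ha
  | succ n => rw [mod3Walk]; omega

theorem mod3Walk_injective : Function.Injective (mod3Walk a) := by
  intro g g' h
  funext n
  have := congrFun h (n + 1)
  rw [mod3Walk, mod3Walk, congrFun h n] at this
  have := Bool.toNat_le (g n)
  have := Bool.toNat_le (g' n)
  have hbit : (g n).toNat = (g' n).toNat := by omega
  revert hbit
  cases g n <;> cases g' n <;> decide

end mod3Walk

theorem continuum_le_mk_alternating_sval {s a : ℕ} {A : Finset ℕ} (hs : 2 < s) (ha : a ∈ A)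
    (has : a < s) :
    Cardinal.continuum ≤ Cardinal.mk {x : ℝ | ∃ α : ℕ → ℕ, isDigits s α ∧ α 0 ∈ A ∧
      (∀ n, α (n + 1) ≠ α n) ∧ x = sval s α} := by
  let F : (ℕ → Bool) → {x : ℝ | ∃ α : ℕ → ℕ, isDigits s α ∧ α 0 ∈ A ∧
      (∀ n, α (n + 1) ≠ α n) ∧ x = sval s α} := fun g ↦
    ⟨sval s (mod3Walk a g), mod3Walk a g, mod3Walk_isDigits hs has, ha, mod3Walk_succ_ne, rfl⟩
  have hF : Function.Injective F := fun g g' h ↦ mod3Walk_injective <|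
    eq_of_sval_eq (mod3Walk_isDigits hs has) (mod3Walk_isDigits hs has)
      (not_eventuallyConst_of_succ_ne mod3Walk_succ_ne) (congrArg Subtype.val h)
  calc Cardinal.continuum = Cardinal.mk (ℕ → Bool) := by simp
    _ ≤ _ := Cardinal.mk_le_of_injective hF

theorem f_level_one_third_general (s : ℕ) (hs : 2 < s) (A0 A1 : Finset ℕ)
    (hA : A0 ∪ A1 = Finset.range s) (hdisj : Disjoint A0 A1)
    (h0 : A0.Nonempty) (f : ℝ → ℝ)
    (hf : ∀ α : ℕ → ℕ, isDigits s α → f (sval s α) = sval 2 (betaSeq A1 α)) :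
    {x ∈ Set.Icc (0 : ℝ) 1 | f x = 1 / 3} =
      {x : ℝ | ∃ α : ℕ → ℕ, isDigits s α ∧ α 0 ∈ A0 ∧ (∀ n, α (n + 1) ≠ α n) ∧
        x = sval s α} ∧
    Cardinal.mk {x ∈ Set.Icc (0 : ℝ) 1 | f x = 1 / 3} = Cardinal.continuum := by
  have hlevel : ∀ α, isDigits s α → (f (sval s α) = 1 / 3 ↔ α 0 ∉ A1 ∧ ∀ n, α (n + 1) ≠ α n) :=
    fun α hα ↦ by
      rw [hf α hα, sval_two_eq_one_third_iff (betaSeq_isDigits A1 α), betaSeq_eq_mod_two_iff]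
  have hset : {x ∈ Set.Icc (0 : ℝ) 1 | f x = 1 / 3} =
      {x : ℝ | ∃ α : ℕ → ℕ, isDigits s α ∧ α 0 ∈ A0 ∧ (∀ n, α (n + 1) ≠ α n) ∧
        x = sval s α} := by
    ext x
    constructor
    · rintro ⟨hx, hfx⟩
      obtain ⟨α, hα, rfl⟩ := exists_sval_eq_of_mem_Icc (s := s) (by omega) hx
      obtain ⟨hA1, hne⟩ := (hlevel α hα).1 hfx
      have hmem : α 0 ∈ A0 ∪ A1 := hA ▸ Finset.mem_range.2 (hα 0)
      exact ⟨α, hα, (Finset.mem_union.1 hmem).resolve_right hA1, hne, rfl⟩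
    · rintro ⟨α, hα, hA0, hne, rfl⟩
      exact ⟨sval_mem_Icc hα, (hlevel α hα).2 ⟨Finset.disjoint_left.1 hdisj hA0, hne⟩⟩
  obtain ⟨a, ha⟩ := h0
  have has : a < s := Finset.mem_range.1 (hA ▸ Finset.mem_union_left A1 ha)
  refine ⟨hset, le_antisymm ((Cardinal.mk_set_le _).trans_eq Cardinal.mk_real) ?_⟩
  rw [hset]
  exact continuum_le_mk_alternating_sval hs ha has

/-- the level set `f⁻¹({1/3})` (where `1/3 = Δ²_{(01)}`) equals the set of
numbers whose `s`-adic expansion `(αₙ)` satisfies `α₁ ∈ A₀` and `α_{n+1} ≠ αₙ` for all `n`,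
and it has the cardinality of the continuum. -/
theorem f_level_one_third (s : ℕ) (hs : 2 < s) (A0 A1 : Finset ℕ)
    (hA : A0 ∪ A1 = Finset.range s) (hdisj : Disjoint A0 A1)
    (h0 : A0.Nonempty) (h1 : A1.Nonempty) (f : ℝ → ℝ)
    (hf : ∀ α : ℕ → ℕ, isDigits s α → f (sval s α) = sval 2 (betaSeq A1 α)) :
    {x ∈ Set.Icc (0 : ℝ) 1 | f x = 1 / 3} =
      {x : ℝ | ∃ α : ℕ → ℕ, isDigits s α ∧ α 0 ∈ A0 ∧ (∀ n, α (n + 1) ≠ α n) ∧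
        x = sval s α} ∧
    Cardinal.mk {x ∈ Set.Icc (0 : ℝ) 1 | f x = 1 / 3} = Cardinal.continuum :=
  f_level_one_third_general s hs A0 A1 hA hdisj h0 f hf
end

section
/- The function f has unbounded variation on [0,1]: for every M > 0 there exists a partition 0 = x₀ < x₁ < … < x_N = 1 with Σ |f(xᵢ) − f(x_{i−1})| > M. -/
open Set Filter

lemma betaSeq_succ (A1 : Finset ℕ) (α : ℕ → ℕ) (k : ℕ) :
    betaSeq A1 α (k + 1) = if α (k + 1) = α k then betaSeq A1 α k else 1 - betaSeq A1 α k := rfl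

lemma betaSeq_le_one (A1 : Finset ℕ) (α : ℕ → ℕ) : ∀ k, betaSeq A1 α k ≤ 1
  | 0 => by unfold betaSeq; split <;> omega
  | k + 1 => by
      have := betaSeq_le_one A1 α k
      unfold betaSeq; split <;> omega

lemma betaSeq_congr (A1 : Finset ℕ) (α α' : ℕ → ℕ) :
    ∀ k, (∀ i ≤ k, α i = α' i) → betaSeq A1 α k = betaSeq A1 α' k
  | 0, h => by unfold betaSeq; rw [h 0 le_rfl]
  | k + 1, h => by
      have ih := betaSeq_congr A1 α α' k (fun i hi => h i (hi.trans (Nat.le_succ k)))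
      unfold betaSeq
      rw [h (k+1) le_rfl, h k (Nat.le_succ k), ih]

lemma betaSeq_const_tail (A1 : Finset ℕ) (α : ℕ → ℕ) (n : ℕ)
    (h : ∀ k, n ≤ k → α (k + 1) = α k) :
    ∀ k, n ≤ k → betaSeq A1 α k = betaSeq A1 α n := by
  intro k
  induction k with
  | zero =>
      intro hk
      have : n = 0 := by omega
      rw [this]
  | succ k ih =>
      intro hk
      rcases Nat.lt_or_ge k n with h' | h'
      · have : n = k + 1 := by omega
        rw [this]
      · have hα : α (k + 1) = α k := h k h'
        calc betaSeq A1 α (k + 1) = betaSeq A1 α k := by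
              rw [betaSeq_succ, if_pos hα]
          _ = betaSeq A1 α n := ih h'

/-- `sval` of a sequence which is constant from index `n` on. -/
lemma sval_tail_const {s : ℕ} (hs : 1 < s) (n : ℕ) (g : ℕ → ℕ)
    (hg : ∀ k, n ≤ k → g k = g n) :
    sval s g = (∑ i ∈ Finset.range n, (g i : ℝ) / (s:ℝ)^(i+1))
      + (g n : ℝ) / (((s:ℝ) - 1) * (s:ℝ)^n) := by
  have hs1 : (1:ℝ) < (s:ℝ) := by exact_mod_cast hs
  have hs0 : (0:ℝ) < (s:ℝ) := by linarith
  have hr0 : (0:ℝ) ≤ 1/(s:ℝ) := by positivity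
  have hr1 : 1/(s:ℝ) < 1 := by rw [div_lt_one hs0]; exact hs1
  set F : ℕ → ℝ := fun k => (g k : ℝ) / (s:ℝ)^(k+1) with hF
  have htl : ∀ k : ℕ, F (k + n) = ((g n : ℝ)/(s:ℝ)^(n+1)) * (1/(s:ℝ))^k := by
    intro k
    simp only [hF]
    rw [hg (k + n) (by omega)]
    rw [one_div, inv_pow, ← div_eq_mul_inv, div_div, ← pow_add]
    congr 2
    omega
  have hsum : Summable F := by
    rw [← summable_nat_add_iff n]
    apply Summable.congr ((summable_geometric_of_lt_one hr0 hr1).mul_left ((g n : ℝ)/(s:ℝ)^(n+1)))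
    intro k
    rw [htl k]
  have hsplit := Summable.sum_add_tsum_nat_add (f := F) n hsum
  have htail : ∑' k : ℕ, F (k + n) = (g n : ℝ) / (((s:ℝ) - 1) * (s:ℝ)^n) := by
    rw [tsum_congr htl, tsum_mul_left, tsum_geometric_of_lt_one hr0 hr1]
    have h1 : (1 : ℝ) - 1/(s:ℝ) = ((s:ℝ) - 1)/(s:ℝ) := by field_simp
    have hne : (s:ℝ) - 1 ≠ 0 := by linarith
    rw [h1, pow_succ]
    field_simp
  have hd : sval s g = ∑' k, F k := rfl
  rw [hd, ← hsplit, htail]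

lemma digit_sum_nat (s : ℕ) : ∀ n j, ∑ i ∈ Finset.range n, (j / s^i % s) * s^i = j % s^n
  | 0, j => by simp [Nat.mod_one]
  | n + 1, j => by
      rw [Finset.sum_range_succ, digit_sum_nat s n j, Nat.mod_pow_succ]
      ring

lemma digit_sum_real {s : ℕ} (hs : 1 < s) {n j : ℕ} (hj : j < s^n) :
    ∑ i ∈ Finset.range n, ((j / s^(n-1-i) % s : ℕ) : ℝ) / (s:ℝ)^(i+1) = (j:ℝ) / (s:ℝ)^n := by
  have hs0 : (0:ℝ) < (s:ℝ) := by
    have : 0 < s := by omega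
    exact_mod_cast this
  have hnat : ∑ i ∈ Finset.range n, (j / s^(n-1-i) % s) * s^(n-1-i) = j := by
    have hrefl := Finset.sum_range_reflect (fun i => (j / s^i % s) * s^i) n
    simpa [digit_sum_nat s n j, Nat.mod_eq_of_lt hj] using hrefl
  have hstep : ∀ i ∈ Finset.range n,
      ((j / s^(n-1-i) % s : ℕ) : ℝ) / (s:ℝ)^(i+1)
        = (((j / s^(n-1-i) % s) * s^(n-1-i) : ℕ) : ℝ) / (s:ℝ)^n := by
    intro i hi
    have hi' : i < n := Finset.mem_range.mp hi
    have hpow : (s:ℝ)^(i+1) * (s:ℝ)^(n-1-i) = (s:ℝ)^n := by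
      rw [← pow_add]; congr 1; omega
    push_cast
    rw [div_eq_div_iff (by positivity) (by positivity), ← hpow]
    ring
  rw [Finset.sum_congr rfl hstep, ← Finset.sum_div, ← Nat.cast_sum, hnat]

/-- `f` has unbounded variation on `[0,1]`: for every `M > 0` there is a
partition `0 = x₀ < x₁ < … < x_N = 1` with `∑ |f(xᵢ) − f(x_{i−1})| > M`. -/
theorem f_unbounded_variation (s : ℕ) (hs : 2 < s) (A0 A1 : Finset ℕ)
    (hA : A0 ∪ A1 = Finset.range s) (hdisj : Disjoint A0 A1)
    (h0 : A0.Nonempty) (h1 : A1.Nonempty) (f : ℝ → ℝ)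
    (hf : ∀ α : ℕ → ℕ, isDigits s α → f (sval s α) = sval 2 (betaSeq A1 α)) :
    ∀ M : ℝ, 0 < M → ∃ (N : ℕ) (x : ℕ → ℝ), x 0 = 0 ∧ x N = 1 ∧
      (∀ i < N, x i < x (i + 1)) ∧
      M < ∑ i ∈ Finset.range N, |f (x (i + 1)) - f (x i)| := by
  intro M hM
  have hs1 : 1 < s := by omega
  have hsR : (3:ℝ) ≤ (s:ℝ) := by exact_mod_cast hs
  have hsR1 : (1:ℝ) < (s:ℝ) := by linarith
  have hs0 : (0:ℝ) < (s:ℝ) := by linarith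
  have hsm1 : (0:ℝ) < (s:ℝ) - 1 := by linarith
  obtain ⟨m, hm⟩ := pow_unbounded_of_one_lt (M * 2) (y := (3/2:ℝ)) (by norm_num)
  obtain ⟨n, hn⟩ : ∃ n, n = m + 1 := ⟨m + 1, rfl⟩
  obtain ⟨T, hT⟩ : ∃ T, T = s ^ m := ⟨s ^ m, rfl⟩
  have hT1 : 1 ≤ T := by rw [hT]; exact Nat.one_le_pow _ _ (by omega)
  have hsn : (s:ℝ) * (T:ℝ) = (s:ℝ)^n := by
    rw [hn, hT, pow_succ]; push_cast; ring
  -- digit sequences and sample points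
  set α : ℕ → ℕ → ℕ → ℕ := fun j d k => if k < n then j / s^(n-1-k) % s else d with hα
  have hdig : ∀ j d, d < s → isDigits s (α j d) := by
    intro j d hd k
    simp only [hα]
    split
    · exact Nat.mod_lt _ (by omega)
    · exact hd
  set pt : ℕ → ℕ → ℝ := fun j d => ((j:ℝ) + (d:ℝ)/((s:ℝ)-1)) / (s:ℝ)^n with hpt
  have hαtail : ∀ j d k, n ≤ k → α j d k = α j d n := by
    intro j d k hk
    simp only [hα]
    rw [if_neg (by omega), if_neg (by omega)]
  have hαn : ∀ j d, α j d n = d := by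
    intro j d; simp only [hα]; rw [if_neg (by omega)]
  have hαlt : ∀ j d i, i < n → α j d i = j / s^(n-1-i) % s := by
    intro j d i hi; simp only [hα]; rw [if_pos hi]
  have hsv : ∀ j d, j < s^n → sval s (α j d) = pt j d := by
    intro j d hj
    rw [sval_tail_const hs1 n (α j d) (hαtail j d), hαn j d]
    have hsum : ∑ i ∈ Finset.range n, ((α j d i : ℕ):ℝ) / (s:ℝ)^(i+1) = (j:ℝ)/(s:ℝ)^n := by
      rw [← digit_sum_real hs1 hj]
      apply Finset.sum_congr rfl
      intro i hi
      rw [hαlt j d i (Finset.mem_range.mp hi)]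
    rw [hsum]
    simp only [hpt]
    have hne1 : (s:ℝ) - 1 ≠ 0 := ne_of_gt hsm1
    have hne2 : (s:ℝ) ≠ 0 := ne_of_gt hs0
    field_simp
  -- f at sampled points
  have hβtail : ∀ j d k, n ≤ k → betaSeq A1 (α j d) k = betaSeq A1 (α j d) n := by
    intro j d
    apply betaSeq_const_tail
    intro k hk
    rw [hαtail j d (k+1) (by omega), hαtail j d k hk]
  have hfpt : ∀ j d, j < s^n → d < s →
      f (pt j d) = (∑ k ∈ Finset.range n, (betaSeq A1 (α j d) k : ℝ)/2^(k+1))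
        + (betaSeq A1 (α j d) n : ℝ) / 2^n := by
    intro j d hj hd
    rw [← hsv j d hj, hf _ (hdig j d hd)]
    have h2 := sval_tail_const (s := 2) (by norm_num) n (betaSeq A1 (α j d)) (hβtail j d)
    rw [h2]
    norm_num
  -- the per-cylinder jump
  have hjump : ∀ t, t < T → |f (pt (s*t+1) 2) - f (pt (s*t+1) 1)| = 1/2^n := by
    intro t ht
    set j := s*t+1 with hj
    have hjlt : j < s^n := by
      have ht' : t + 1 ≤ s ^ m := by omega
      have h2 : s * (t+1) ≤ s * s^m := Nat.mul_le_mul_left s ht'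
      have h3 : s * (t+1) = s*t + s := by ring
      have h4 : s^n = s * s^m := by rw [hn, pow_succ]; ring
      omega
    have hjmod : j % s = 1 := by
      rw [hj, Nat.mul_add_mod]
      exact Nat.mod_eq_of_lt (by omega)
    have ham : ∀ d, α j d m = 1 := by
      intro d
      rw [hαlt j d m (by omega)]
      have hn1m : n - 1 - m = 0 := by omega
      rw [hn1m, pow_zero, Nat.div_one, hjmod]
    have hbcongr : ∀ k, k ≤ m → betaSeq A1 (α j 1) k = betaSeq A1 (α j 2) k := by
      intro k hk
      apply betaSeq_congr
      intro i hi
      rw [hαlt j 1 i (by omega), hαlt j 2 i (by omega)]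
    set e := betaSeq A1 (α j 1) m with he
    have he1 : e ≤ 1 := betaSeq_le_one _ _ m
    have hb1 : betaSeq A1 (α j 1) n = e := by
      have h11 : α j 1 (m+1) = α j 1 m := by
        rw [← hn, hαn j 1, ham 1]
      rw [hn, betaSeq_succ, if_pos h11]
    have hb2 : betaSeq A1 (α j 2) n = 1 - e := by
      have h21 : α j 2 (m+1) ≠ α j 2 m := by
        rw [← hn, hαn j 2, ham 2]; omega
      rw [hn, betaSeq_succ, if_neg h21, ← hbcongr m le_rfl]
    rw [hfpt j 2 hjlt (by omega), hfpt j 1 hjlt (by omega), hb1, hb2]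
    have hSeq : ∑ k ∈ Finset.range n, (betaSeq A1 (α j 2) k : ℝ)/2^(k+1)
        = ∑ k ∈ Finset.range n, (betaSeq A1 (α j 1) k : ℝ)/2^(k+1) := by
      apply Finset.sum_congr rfl
      intro k hk
      have hk' : k < n := Finset.mem_range.mp hk
      rw [hbcongr k (by omega)]
    rw [hSeq]
    set S := ∑ k ∈ Finset.range n, (betaSeq A1 (α j 1) k : ℝ)/2^(k+1) with hS
    have he' : e = 0 ∨ e = 1 := by omega
    rcases he' with h | h <;> rw [h] <;> norm_num <;>
      rw [abs_of_nonneg (by positivity)]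
  -- the partition
  set x : ℕ → ℝ := fun i =>
      if i = 0 then 0 else if 2*T+1 ≤ i then 1 else pt (s*((i-1)/2)+1) ((i-1)%2+1) with hx
  have hx0 : x 0 = 0 := by simp [hx]
  have hxN : x (2*T+1) = 1 := by
    simp only [hx]
    rw [if_neg (by omega), if_pos le_rfl]
  have hxo : ∀ t, t < T → x (2*t+1) = pt (s*t+1) 1 := by
    intro t ht
    simp only [hx]
    rw [if_neg (by omega), if_neg (by omega)]
    have e1 : (2*t+1-1)/2 = t := by omega
    have e2 : (2*t+1-1)%2 = 0 := by omega
    rw [e1, e2]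
  have hxe : ∀ t, t < T → x (2*t+2) = pt (s*t+1) 2 := by
    intro t ht
    simp only [hx]
    rw [if_neg (by omega), if_neg (by omega)]
    have e1 : (2*t+2-1)/2 = t := by omega
    have e2 : (2*t+2-1)%2 = 1 := by omega
    rw [e1, e2]
  have hptlt : ∀ a b : ℝ, a < b → a / (s:ℝ)^n < b / (s:ℝ)^n := by
    intro a b h
    exact (div_lt_div_iff_of_pos_right (by positivity)).mpr h
  refine ⟨2*T+1, x, hx0, hxN, ?_, ?_⟩
  · -- strict monotonicity
    intro i hi
    rcases Nat.eq_zero_or_pos i with rfl | hipos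
    · have h1 : x (0+1) = pt (s*0+1) 1 := by
        have := hxo 0 (by omega)
        simpa using this
      rw [hx0, h1]
      simp only [hpt]
      apply div_pos _ (by positivity)
      have := one_div_pos.mpr hsm1
      push_cast
      linarith
    · rcases Nat.even_or_odd i with ⟨t, ht⟩ | ⟨t, ht⟩
      · -- i = 2t even, 1 ≤ i ≤ 2T
        have ht1 : 1 ≤ t := by omega
        have htT : t ≤ T := by omega
        have hi2 : i = 2*(t-1)+2 := by omega
        have hxi : x i = pt (s*(t-1)+1) 2 := by rw [hi2]; exact hxe (t-1) (by omega)
        rcases Nat.lt_or_ge t T with htlt | htge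
        · have hi1 : i + 1 = 2*t+1 := by omega
          rw [hi1, hxo t htlt, hxi]
          simp only [hpt]
          apply hptlt
          have hc : ((s*(t-1)+1 : ℕ) : ℝ) = (s:ℝ)*(t:ℝ) - (s:ℝ) + 1 := by
            push_cast [Nat.cast_sub ht1]
            ring
          rw [hc]
          push_cast
          have h2d : 2/((s:ℝ)-1) ≤ 1 := by rw [div_le_one hsm1]; linarith
          have h1d : 0 < 1/((s:ℝ)-1) := one_div_pos.mpr hsm1
          linarith
        · -- t = T : last step up to 1
          have htT' : t = T := by omega
          have hi1 : i + 1 = 2*T+1 := by omega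
          rw [hi1, hxN, hxi, htT']
          simp only [hpt]
          rw [div_lt_one (by positivity)]
          have hc : ((s*(T-1)+1 : ℕ) : ℝ) = (s:ℝ)*(T:ℝ) - (s:ℝ) + 1 := by
            push_cast [Nat.cast_sub hT1]
            ring
          rw [hc, ← hsn]
          have h2d : 2/((s:ℝ)-1) < (s:ℝ) - 1 := by rw [div_lt_iff₀ hsm1]; nlinarith
          linarith
      · -- i = 2t+1 odd
        have htlt : t < T := by omega
        rw [ht, show 2*t+1+1 = 2*t+2 from rfl, hxo t htlt, hxe t htlt]
        simp only [hpt]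
        apply hptlt
        have : (1:ℝ)/((s:ℝ)-1) < 2/((s:ℝ)-1) :=
          (div_lt_div_iff_of_pos_right hsm1).mpr (by norm_num)
        push_cast
        linarith
  · -- the variation is large
    have hinj : ∀ a ∈ Finset.range T, ∀ b ∈ Finset.range T,
        2*a+1 = 2*b+1 → a = b := by intro a _ b _ h; omega
    have hsub : (Finset.range T).image (fun t => 2*t+1) ⊆ Finset.range (2*T+1) := by
      intro i hi
      simp only [Finset.mem_image, Finset.mem_range] at hi ⊢
      obtain ⟨t, ht, rfl⟩ := hi
      omega
    have h1 : ∑ i ∈ (Finset.range T).image (fun t => 2*t+1), |f (x (i+1)) - f (x i)|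
        ≤ ∑ i ∈ Finset.range (2*T+1), |f (x (i+1)) - f (x i)| :=
      Finset.sum_le_sum_of_subset_of_nonneg hsub (fun i _ _ => abs_nonneg _)
    have h2 : ∑ i ∈ (Finset.range T).image (fun t => 2*t+1), |f (x (i+1)) - f (x i)|
        = ∑ t ∈ Finset.range T, |f (x (2*t+1+1)) - f (x (2*t+1))| :=
      Finset.sum_image hinj
    have h3 : ∑ t ∈ Finset.range T, |f (x (2*t+1+1)) - f (x (2*t+1))| = (T:ℝ)/2^n := by
      have hterm : ∀ t ∈ Finset.range T,
          |f (x (2*t+1+1)) - f (x (2*t+1))| = 1/2^n := by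
        intro t ht
        have ht' : t < T := Finset.mem_range.mp ht
        have h21 : 2*t+1+1 = 2*t+2 := by omega
        rw [h21, hxe t ht', hxo t ht']
        exact hjump t ht'
      rw [Finset.sum_congr rfl hterm, Finset.sum_const, Finset.card_range, nsmul_eq_mul]
      ring
    have h4 : M < (T:ℝ)/2^n := by
      rw [hn, lt_div_iff₀ (by positivity : (0:ℝ) < (2:ℝ)^(m+1))]
      rw [div_pow] at hm
      have h2m : (0:ℝ) < (2:ℝ)^m := by positivity
      have h5 := (lt_div_iff₀ h2m).mp hm
      have h3m : (3:ℝ)^m ≤ (T:ℝ) := by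
        rw [hT]; push_cast
        exact pow_le_pow_left₀ (by norm_num) hsR m
      calc M * 2^(m+1) = M * 2 * 2^m := by ring
        _ < 3^m := h5
        _ ≤ (T:ℝ) := h3m
    calc M < (T:ℝ)/2^n := h4
      _ = _ := h3.symm
      _ = _ := h2.symm
      _ ≤ _ := h1
end
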